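/- Power loss of the t test from correlated errors for large signals (Supplementary Lemma, part 2): Let α ∈ (0, 1/2), so that z_α = Φ^{−1}(1−α) > 0, and let ρ ∈ (0,1). Let f denote the density of the chi-squared distribution with 1 degree of freedom and let T ~ χ₁². If h > max( 2z_α, P(T < 1) / (z_α · ∫₁^∞ f(t)·(1 − (ρt + 1 − ρ)^{−1/2}) dt) ), then Δπ(h, ρ) < 0, i.e. E[Φ(h·(ρT + 1 − ρ)^{−1/2} − z_α)] < Φ(h − z_α). -/

import Mathlib

/-!
Put `c = h - z_α` and `w(t) = √(ρt + 1 - ρ)`, and split `E[Φ(h/w(T) - z_α)] - Φ(c)` at `T = 1`.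
For `T < 1` the integrand is at most `1 - Φ(c) ≤ φ(c)/c ≤ φ(c)/z_α` by Mills' ratio, as `c ≥ z_α`.
For `T > 1` we have `w > 1` and, since `h ≥ 2z_α`, the interval `[h/w - z_α, c]` lies in `[-c, c]`,
where the Gaussian density is at least `φ(c)`; so the integrand is at most `-h(1 - 1/w)φ(c)`.
Altogether `Δπ(h, ρ) ≤ φ(c)/z_α · (P(T < 1) - h z_α ∫₁^∞ f(t)(1 - 1/w(t)) dt)`, which is negative
by the lower bound on `h`.
-/

open MeasureTheory ProbabilityTheory Filter

/-- Standard normal cumulative distribution function `Φ`. -/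
noncomputable def stdGaussCDF (t : ℝ) : ℝ :=
  ((gaussianReal 0 1) (Set.Iic t)).toReal

/-- Density of the chi-squared distribution with 1 degree of freedom. -/
noncomputable def chi1PDF (t : ℝ) : ℝ :=
  if 0 < t then (Real.sqrt (2 * Real.pi * t))⁻¹ * Real.exp (-t / 2) else 0

open Set Real Topology

local notation "φ" => gaussianPDFReal 0 1

lemma stdGaussCDF_eq_cdf : stdGaussCDF = cdf (gaussianReal 0 1) := by
  funext t
  rw [cdf_eq_real]
  rfl

lemma stdGaussCDF_nonneg (t : ℝ) : 0 ≤ stdGaussCDF t := ENNReal.toReal_nonneg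

lemma stdGaussCDF_le_one (t : ℝ) : stdGaussCDF t ≤ 1 :=
  stdGaussCDF_eq_cdf ▸ cdf_le_one _ t

lemma monotone_stdGaussCDF : Monotone stdGaussCDF :=
  stdGaussCDF_eq_cdf ▸ monotone_cdf _

lemma MeasureTheory.Integrable.mul_stdGaussCDF_comp {α : Type*} [MeasurableSpace α]
    {μ : Measure α} {f g : α → ℝ} (hf : Integrable f μ) (hg : Measurable g) :
    Integrable (fun x => f x * stdGaussCDF (g x)) μ := by
  refine hf.mul_bdd (c := 1) (monotone_stdGaussCDF.measurable.comp hg).aestronglyMeasurable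
    (ae_of_all _ fun x => ?_)
  rw [Real.norm_of_nonneg (stdGaussCDF_nonneg _)]
  exact stdGaussCDF_le_one _

lemma gaussianPDFReal_zero_one (x : ℝ) : φ x = (√(2 * π))⁻¹ * rexp (-x ^ 2 / 2) := by
  simp [gaussianPDFReal]

lemma integrable_gaussianPDFReal_zero_one : Integrable φ := integrable_gaussianPDFReal 0 1

lemma stdGaussCDF_eq_integral (t : ℝ) : stdGaussCDF t = ∫ x in Iic t, φ x := by
  rw [stdGaussCDF, gaussianReal_apply_eq_integral 0 one_ne_zero,
    ENNReal.toReal_ofReal (integral_nonneg fun x => gaussianPDFReal_nonneg 0 1 x)]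

lemma stdGaussCDF_sub_eq_integral {a b : ℝ} (hab : a ≤ b) :
    stdGaussCDF b - stdGaussCDF a = ∫ x in Ioc a b, φ x := by
  rw [stdGaussCDF_eq_integral, stdGaussCDF_eq_integral,
    intervalIntegral.integral_Iic_sub_Iic integrable_gaussianPDFReal_zero_one.integrableOn
      integrable_gaussianPDFReal_zero_one.integrableOn,
    intervalIntegral.integral_of_le hab]

lemma one_sub_stdGaussCDF_eq_integral (t : ℝ) : 1 - stdGaussCDF t = ∫ x in Ioi t, φ x := by
  rw [← integral_gaussianPDFReal_eq_one 0 one_ne_zero, stdGaussCDF_eq_integral,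
    ← intervalIntegral.integral_Iic_add_Ioi integrable_gaussianPDFReal_zero_one.integrableOn
      integrable_gaussianPDFReal_zero_one.integrableOn, add_sub_cancel_left]

lemma stdGaussCDF_zero : stdGaussCDF 0 = 1 / 2 := by
  have hsymm : ∫ x in Ioi (0 : ℝ), φ x = stdGaussCDF 0 := by
    rw [stdGaussCDF_eq_integral, ← neg_zero, ← integral_comp_neg_Ioi]
    simp [gaussianPDFReal_zero_one]
  linarith [one_sub_stdGaussCDF_eq_integral 0]

lemma hasDerivAt_neg_gaussianPDFReal_zero_one (x : ℝ) :
    HasDerivAt (fun y => -φ y) (x * φ x) x := by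
  have hsq : HasDerivAt (fun y : ℝ => -y ^ 2 / 2) (-x) x :=
    ((hasDerivAt_pow 2 x).neg.div_const 2).congr_deriv (by ring)
  simp_rw [gaussianPDFReal_zero_one]
  exact (hsq.exp.const_mul _).neg.congr_deriv (by ring)

lemma tendsto_neg_gaussianPDFReal_zero_one_atTop : Tendsto (fun y => -φ y) atTop (𝓝 0) := by
  have hsq : Tendsto (fun y : ℝ => -y ^ 2 / 2) atTop atBot :=
    (tendsto_neg_atTop_atBot.comp (tendsto_pow_atTop two_ne_zero)).atBot_div_const two_pos
  have := ((tendsto_exp_atBot.comp hsq).const_mul (√(2 * π))⁻¹).neg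
  rw [mul_zero, neg_zero] at this
  exact this.congr fun y => by rw [gaussianPDFReal_zero_one]; rfl

lemma integrableOn_Ioi_mul_gaussianPDFReal_zero_one {c : ℝ} (hc : 0 ≤ c) :
    IntegrableOn (fun x => x * φ x) (Ioi c) :=
  integrableOn_Ioi_deriv_of_nonneg' (fun x _ => hasDerivAt_neg_gaussianPDFReal_zero_one x)
    (fun x hx => mul_nonneg (hc.trans hx.out.le) (gaussianPDFReal_nonneg 0 1 x))
    tendsto_neg_gaussianPDFReal_zero_one_atTop

lemma integral_Ioi_mul_gaussianPDFReal_zero_one {c : ℝ} (hc : 0 ≤ c) :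
    ∫ x in Ioi c, x * φ x = φ c := by
  rw [integral_Ioi_of_hasDerivAt_of_nonneg'
    (fun x _ => hasDerivAt_neg_gaussianPDFReal_zero_one x)
    (fun x hx => mul_nonneg (hc.trans hx.out.le) (gaussianPDFReal_nonneg 0 1 x))
    tendsto_neg_gaussianPDFReal_zero_one_atTop]
  ring

lemma one_sub_stdGaussCDF_le_div {c : ℝ} (hc : 0 < c) : 1 - stdGaussCDF c ≤ φ c / c := by
  calc 1 - stdGaussCDF c = ∫ x in Ioi c, φ x := one_sub_stdGaussCDF_eq_integral c
    _ ≤ ∫ x in Ioi c, c⁻¹ * (x * φ x) := by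
      refine setIntegral_mono_on integrable_gaussianPDFReal_zero_one.integrableOn
        ((integrableOn_Ioi_mul_gaussianPDFReal_zero_one hc.le).const_mul _) measurableSet_Ioi
        fun x hx => ?_
      rw [← mul_assoc, inv_mul_eq_div]
      exact le_mul_of_one_le_left (gaussianPDFReal_nonneg 0 1 x) ((one_le_div hc).2 hx.out.le)
    _ = φ c / c := by
      rw [integral_const_mul, integral_Ioi_mul_gaussianPDFReal_zero_one hc.le, inv_mul_eq_div]

lemma gaussianPDFReal_zero_one_le_of_sq_le {x y : ℝ} (hxy : x ^ 2 ≤ y ^ 2) : φ y ≤ φ x := by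
  rw [gaussianPDFReal_zero_one, gaussianPDFReal_zero_one]
  gcongr

lemma mul_gaussianPDFReal_le_stdGaussCDF_sub {a b : ℝ} (hba : -b ≤ a) (hab : a ≤ b) :
    (b - a) * φ b ≤ stdGaussCDF b - stdGaussCDF a := by
  rw [stdGaussCDF_sub_eq_integral hab, ← Real.volume_real_Ioc_of_le hab, ← smul_eq_mul,
    ← setIntegral_const]
  refine setIntegral_mono_on (integrableOn_const measure_Ioc_lt_top.ne)
    integrable_gaussianPDFReal_zero_one.integrableOn measurableSet_Ioc fun x hx => ?_
  exact gaussianPDFReal_zero_one_le_of_sq_le (sq_le_sq' (by linarith [hx.1]) hx.2)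

lemma stdGaussCDF_mul_sub_le {zα h s : ℝ} (hz : 0 ≤ zα) (hzh : 2 * zα ≤ h) (hs : s ∈ Icc 0 1) :
    stdGaussCDF (h * s - zα) - stdGaussCDF (h - zα) ≤ -(h * (1 - s) * φ (h - zα)) := by
  have hh : 0 ≤ h := by linarith
  have hhs : 0 ≤ h * s := mul_nonneg hh hs.1
  have hsh : h * s ≤ h := mul_le_of_le_one_right hh hs.2
  have key := mul_gaussianPDFReal_le_stdGaussCDF_sub (a := h * s - zα) (b := h - zα)
    (by linarith) (by linarith)
  rw [show h - zα - (h * s - zα) = h * (1 - s) by ring] at key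
  linarith

lemma chi1PDF_eq_gammaPDFReal : chi1PDF = gammaPDFReal (1 / 2) (1 / 2) := by
  funext t
  rcases lt_or_ge 0 t with ht | ht
  · rw [chi1PDF, if_pos ht, gammaPDFReal, if_pos ht.le, Real.Gamma_one_half_eq,
      show (1 : ℝ) / 2 - 1 = -(1 / 2) by norm_num, Real.rpow_neg ht.le, ← Real.sqrt_eq_rpow,
      ← Real.sqrt_eq_rpow, Real.sqrt_mul (by positivity), Real.sqrt_mul (by norm_num),
      one_div, Real.sqrt_inv]
    have : √π ≠ 0 := by positivity
    have : √t ≠ 0 := by positivity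
    field_simp
  · rw [chi1PDF, if_neg ht.not_gt, gammaPDFReal]
    split_ifs with ht'
    · rw [le_antisymm ht ht', Real.zero_rpow (by norm_num)]
      ring
    · rfl

lemma chi1PDF_nonneg (t : ℝ) : 0 ≤ chi1PDF t :=
  chi1PDF_eq_gammaPDFReal ▸ gammaPDFReal_nonneg (by norm_num) (by norm_num) t

lemma chi1PDF_pos {t : ℝ} (ht : 0 < t) : 0 < chi1PDF t :=
  chi1PDF_eq_gammaPDFReal ▸ gammaPDFReal_pos (by norm_num) (by norm_num) ht

lemma measurable_chi1PDF : Measurable chi1PDF :=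
  chi1PDF_eq_gammaPDFReal ▸ measurable_gammaPDFReal _ _

lemma lintegral_chi1PDF : ∫⁻ t, ENNReal.ofReal (chi1PDF t) = 1 :=
  chi1PDF_eq_gammaPDFReal ▸ lintegral_gammaPDF_eq_one (by norm_num) (by norm_num)

lemma integrable_chi1PDF : Integrable chi1PDF := by
  refine ⟨measurable_chi1PDF.aestronglyMeasurable, ?_⟩
  rw [hasFiniteIntegral_iff_ofReal (ae_of_all _ chi1PDF_nonneg), lintegral_chi1PDF]
  exact ENNReal.one_lt_top

lemma integral_chi1PDF : ∫ t, chi1PDF t = 1 := by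
  rw [integral_eq_lintegral_of_nonneg_ae (ae_of_all _ chi1PDF_nonneg)
    measurable_chi1PDF.aestronglyMeasurable, lintegral_chi1PDF, ENNReal.toReal_one]

lemma setIntegral_pos_of_pos_on {α : Type*} [MeasurableSpace α] {μ : Measure α} {s : Set α}
    {f : α → ℝ} (hs : MeasurableSet s) (hμs : μ s ≠ 0) (hf : IntegrableOn f s μ)
    (hpos : ∀ x ∈ s, 0 < f x) : 0 < ∫ x in s, f x ∂μ := by
  rw [setIntegral_pos_iff_support_of_nonneg_ae
    ((ae_restrict_iff' hs).2 (ae_of_all _ fun x hx => (hpos x hx).le)) hf]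
  exact (pos_iff_ne_zero.2 hμs).trans_le (measure_mono fun x hx => ⟨(hpos x hx).ne', hx⟩)

lemma integral_le_setIntegral_add_setIntegral_compl {α : Type*} [MeasurableSpace α]
    {μ : Measure α} {s : Set α} {F u v : α → ℝ} (hs : MeasurableSet s) (hF : Integrable F μ)
    (hu : IntegrableOn u s μ) (hv : IntegrableOn v sᶜ μ) (hFu : ∀ x ∈ s, F x ≤ u x)
    (hFv : ∀ x ∈ sᶜ, F x ≤ v x) :
    ∫ x, F x ∂μ ≤ (∫ x in s, u x ∂μ) + ∫ x in sᶜ, v x ∂μ := by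
  rw [← integral_add_compl hs hF]
  exact add_le_add (setIntegral_mono_on hF.integrableOn hu hs hFu)
    (setIntegral_mono_on hF.integrableOn hv hs.compl hFv)

lemma inv_sqrt_mem_Ioo_of_one_lt {ρ t : ℝ} (hρ : 0 < ρ) (ht : 1 < t) :
    (√(ρ * t + 1 - ρ))⁻¹ ∈ Ioo 0 1 := by
  have hw : 1 < √(ρ * t + 1 - ρ) := Real.lt_sqrt_of_sq_lt (by nlinarith)
  exact ⟨inv_pos.2 (one_pos.trans hw), inv_lt_one_of_one_lt₀ hw⟩

lemma integrableOn_chi1PDF_mul_one_sub_inv_sqrt {ρ : ℝ} (hρ : 0 < ρ) :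
    IntegrableOn (fun t => chi1PDF t * (1 - (√(ρ * t + 1 - ρ))⁻¹)) (Ioi 1) := by
  refine integrable_chi1PDF.integrableOn.mul_bdd (c := 1) (by fun_prop) ?_
  refine (ae_restrict_iff' measurableSet_Ioi).2 (ae_of_all _ fun t ht => ?_)
  obtain ⟨h0, h1⟩ := inv_sqrt_mem_Ioo_of_one_lt hρ ht
  rw [Real.norm_of_nonneg (by linarith)]
  linarith

lemma setIntegral_chi1PDF_mul_one_sub_inv_sqrt_pos {ρ : ℝ} (hρ : 0 < ρ) :
    0 < ∫ t in Ioi 1, chi1PDF t * (1 - (√(ρ * t + 1 - ρ))⁻¹) := by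
  refine setIntegral_pos_of_pos_on measurableSet_Ioi (by simp)
    (integrableOn_chi1PDF_mul_one_sub_inv_sqrt hρ) fun t ht => ?_
  exact mul_pos (chi1PDF_pos (one_pos.trans ht))
    (sub_pos.2 (inv_sqrt_mem_Ioo_of_one_lt hρ ht).2)

lemma integral_chi1PDF_mul_stdGaussCDF_sub_le {zα ρ h : ℝ} (hz : 0 ≤ zα) (hzh : 2 * zα ≤ h)
    (hρ : 0 < ρ) :
    (∫ t, chi1PDF t * stdGaussCDF (h / √(ρ * t + 1 - ρ) - zα)) - stdGaussCDF (h - zα) ≤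
      (∫ t in Iio 1, chi1PDF t) * (1 - stdGaussCDF (h - zα)) -
        h * φ (h - zα) * ∫ t in Ioi 1, chi1PDF t * (1 - (√(ρ * t + 1 - ρ))⁻¹) := by
  set Φc := stdGaussCDF (h - zα)
  have hint : Integrable fun t => chi1PDF t * stdGaussCDF (h / √(ρ * t + 1 - ρ) - zα) :=
    integrable_chi1PDF.mul_stdGaussCDF_comp (by fun_prop)
  have hdiff : Integrable fun t =>
      chi1PDF t * (stdGaussCDF (h / √(ρ * t + 1 - ρ) - zα) - Φc) := by
    simp_rw [mul_sub]
    exact hint.sub (integrable_chi1PDF.mul_const Φc)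
  have hsplit := integral_le_setIntegral_add_setIntegral_compl measurableSet_Iic hdiff
    (u := fun t => chi1PDF t * (1 - Φc))
    (v := fun t => -(h * φ (h - zα)) * (chi1PDF t * (1 - (√(ρ * t + 1 - ρ))⁻¹)))
    (integrable_chi1PDF.mul_const _).integrableOn
    (compl_Iic (a := (1 : ℝ)) ▸ (integrableOn_chi1PDF_mul_one_sub_inv_sqrt hρ).const_mul _)
    (fun t _ => mul_le_mul_of_nonneg_left (sub_le_sub_right (stdGaussCDF_le_one _) Φc)
      (chi1PDF_nonneg t))
    (fun t ht => by
      obtain ⟨h0, h1⟩ := inv_sqrt_mem_Ioo_of_one_lt hρ (not_le.1 ht)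
      have := stdGaussCDF_mul_sub_le hz hzh ⟨h0.le, h1.le⟩
      rw [← div_eq_mul_inv] at this
      have := mul_le_mul_of_nonneg_left this (chi1PDF_nonneg t)
      linarith)
  have hmean : ∫ t, chi1PDF t * (stdGaussCDF (h / √(ρ * t + 1 - ρ) - zα) - Φc) =
      (∫ t, chi1PDF t * stdGaussCDF (h / √(ρ * t + 1 - ρ) - zα)) - Φc := by
    simp_rw [mul_sub]
    rw [integral_sub hint (integrable_chi1PDF.mul_const Φc), integral_mul_const,
      integral_chi1PDF, one_mul]
  rw [hmean, compl_Iic, integral_mul_const, integral_const_mul,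
    integral_Iic_eq_integral_Iio] at hsplit
  linarith

/-- **Supplementary Lemma, part 2 (power loss from correlated errors for large
signals):** if `h > max(2z_α, P(T < 1)/(z_α·∫₁^∞ f(t)(1 − (ρt + 1 − ρ)^{−1/2}) dt))`,
then `Δπ(h,ρ) < 0`, i.e. `E[Φ(h·(ρT + 1 − ρ)^{−1/2} − z_α)] < Φ(h − z_α)`, where
`f = chi1PDF` is the density of `T ~ χ²₁`. -/
theorem power_loss_large_signal
    (α : ℝ) (hα : α ∈ Set.Ioo (0 : ℝ) (1 / 2))
    (zα : ℝ) (hzα : stdGaussCDF zα = 1 - α)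
    (ρ : ℝ) (hρ : ρ ∈ Set.Ioo (0 : ℝ) 1)
    (h : ℝ)
    (hlarge : h > max (2 * zα)
      ((∫ t in Set.Iio (1 : ℝ), chi1PDF t) /
        (zα * ∫ t in Set.Ioi (1 : ℝ),
          chi1PDF t * (1 - (Real.sqrt (ρ * t + 1 - ρ))⁻¹)))) :
    (∫ t, chi1PDF t * stdGaussCDF (h / Real.sqrt (ρ * t + 1 - ρ) - zα)) <
      stdGaussCDF (h - zα) := by
  have hz : 0 < zα := by
    by_contra! hz
    have := monotone_stdGaussCDF hz
    rw [hzα, stdGaussCDF_zero] at this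
    linarith [hα.2]
  obtain ⟨h2z, hbig⟩ := max_lt_iff.1 hlarge
  set P := ∫ t in Iio 1, chi1PDF t
  set I := ∫ t in Ioi 1, chi1PDF t * (1 - (√(ρ * t + 1 - ρ))⁻¹)
  have hI : 0 < I := setIntegral_chi1PDF_mul_one_sub_inv_sqrt_pos hρ.1
  have hP : P < h * zα * I := by
    rw [div_lt_iff₀ (mul_pos hz hI)] at hbig
    linarith
  have hmills : 1 - stdGaussCDF (h - zα) ≤ φ (h - zα) / zα :=
    (one_sub_stdGaussCDF_le_div (by linarith)).trans
      (div_le_div_of_nonneg_left (gaussianPDFReal_nonneg 0 1 _) hz (by linarith))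
  rw [← sub_neg]
  calc _ ≤ P * (1 - stdGaussCDF (h - zα)) - h * φ (h - zα) * I :=
        integral_chi1PDF_mul_stdGaussCDF_sub_le hz.le h2z.le hρ.1
    _ ≤ P * (φ (h - zα) / zα) - h * φ (h - zα) * I := by
        gcongr
        exact setIntegral_nonneg measurableSet_Iio fun t _ => chi1PDF_nonneg t
    _ = φ (h - zα) / zα * (P - h * zα * I) := by field_simp
    _ < 0 := mul_neg_of_pos_of_neg (div_pos (gaussianPDFReal_pos 0 1 _ one_ne_zero) hz)
        (by linarith)
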